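/- In the nil affine Hecke algebra H_n, for each 1 ≤ i ≤ n−1: τ_i · Δ_n = Δ_n · τ_i, where Δ_n is the image of Σ_{r=1}^n τ_r⋯τ_{n−1} ⊗ τ_1⋯τ_{r−1} in H_n ι_0 ⊗_{H_{n−1}[y]} ι_1 H_n, the left action being left multiplication on the first factor and the right action right multiplication on the second factor. -/

import Mathlib

open scoped TensorProduct

namespace NilHecke

variable (k : Type) [Field k]

/-- Relations of the nil affine Hecke algebra `H n` (0-based indices: generators
`x_0,…,x_{n-1}` and `τ_0,…,τ_{n-2}`; out-of-range generators are killed). -/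
inductive Rel (n : ℕ) : FreeAlgebra k (ℕ ⊕ ℕ) → FreeAlgebra k (ℕ ⊕ ℕ) → Prop
  | xkill (i : ℕ) (h : n ≤ i) : Rel n (FreeAlgebra.ι k (.inl i)) 0
  | tkill (i : ℕ) (h : n ≤ i + 1) : Rel n (FreeAlgebra.ι k (.inr i)) 0
  | tsq (i : ℕ) : Rel n (FreeAlgebra.ι k (.inr i) * FreeAlgebra.ι k (.inr i)) 0
  | braid (i : ℕ) :
      Rel n (FreeAlgebra.ι k (.inr i) * FreeAlgebra.ι k (.inr (i+1)) * FreeAlgebra.ι k (.inr i))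
        (FreeAlgebra.ι k (.inr (i+1)) * FreeAlgebra.ι k (.inr i) * FreeAlgebra.ι k (.inr (i+1)))
  | tcomm (i j : ℕ) (h : i + 1 < j) :
      Rel n (FreeAlgebra.ι k (.inr i) * FreeAlgebra.ι k (.inr j))
        (FreeAlgebra.ι k (.inr j) * FreeAlgebra.ι k (.inr i))
  | xcomm (i j : ℕ) :
      Rel n (FreeAlgebra.ι k (.inl i) * FreeAlgebra.ι k (.inl j))
        (FreeAlgebra.ι k (.inl j) * FreeAlgebra.ι k (.inl i))
  | txcomm (i j : ℕ) (h1 : j ≠ i) (h2 : j ≠ i + 1) :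
      Rel n (FreeAlgebra.ι k (.inr i) * FreeAlgebra.ι k (.inl j))
        (FreeAlgebra.ι k (.inl j) * FreeAlgebra.ι k (.inr i))
  | tx (i : ℕ) (h : i + 1 < n) :
      Rel n (FreeAlgebra.ι k (.inr i) * FreeAlgebra.ι k (.inl i)
          - FreeAlgebra.ι k (.inl (i+1)) * FreeAlgebra.ι k (.inr i)) 1
  | xt (i : ℕ) (h : i + 1 < n) :
      Rel n (FreeAlgebra.ι k (.inl i) * FreeAlgebra.ι k (.inr i)
          - FreeAlgebra.ι k (.inr i) * FreeAlgebra.ι k (.inl (i+1))) 1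

/-- The nil affine Hecke algebra on `n` strands over `k`. -/
def H (n : ℕ) : Type := RingQuot (Rel k n)

instance (n : ℕ) : Ring (H k n) := inferInstanceAs (Ring (RingQuot (Rel k n)))

instance (n : ℕ) : Algebra k (H k n) := inferInstanceAs (Algebra k (RingQuot (Rel k n)))

/-- The polynomial generator `x_{i+1}` (0-based `x_i`). -/
def X (n i : ℕ) : H k n := RingQuot.mkAlgHom k (Rel k n) (FreeAlgebra.ι k (.inl i))

/-- The nil Hecke generator `τ_{i+1}` (0-based `τ_i`). -/
def T (n i : ℕ) : H k n := RingQuot.mkAlgHom k (Rel k n) (FreeAlgebra.ι k (.inr i))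

/-- The element `s_i = τ_i (x_i - x_{i+1}) - 1`. -/
def s (n i : ℕ) : H k n := T k n i * (X k n i - X k n (i+1)) - 1

/-- The ascending product `τ_a τ_{a+1} ⋯ τ_{b-1}` (0-based). -/
def chain (n a b : ℕ) : H k n := (List.map (T k n) (List.range' a (b - a))).prod

theorem X_kill (n i : ℕ) (h : n ≤ i) : X k n i = 0 := by
  have hr := RingQuot.mkAlgHom_rel k (Rel.xkill (k := k) (n := n) i h)
  simp only [X, map_zero] at hr
  exact hr

theorem T_kill (n i : ℕ) (h : n ≤ i + 1) : T k n i = 0 := by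
  have hr := RingQuot.mkAlgHom_rel k (Rel.tkill (k := k) (n := n) i h)
  simp only [T, map_zero] at hr
  exact hr

theorem T_sq (n i : ℕ) : T k n i * T k n i = 0 := by
  have hr := RingQuot.mkAlgHom_rel k (Rel.tsq (k := k) (n := n) i)
  simp only [T, map_mul, map_zero] at hr
  exact hr

theorem T_braid (n i : ℕ) :
    T k n i * T k n (i+1) * T k n i = T k n (i+1) * T k n i * T k n (i+1) := by
  have hr := RingQuot.mkAlgHom_rel k (Rel.braid (k := k) (n := n) i)
  simp only [T, map_mul] at hr
  exact hr

theorem T_comm (n i j : ℕ) (h : i + 1 < j) : T k n i * T k n j = T k n j * T k n i := by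
  have hr := RingQuot.mkAlgHom_rel k (Rel.tcomm (k := k) (n := n) i j h)
  simp only [T, map_mul] at hr
  exact hr

theorem X_comm (n i j : ℕ) : X k n i * X k n j = X k n j * X k n i := by
  have hr := RingQuot.mkAlgHom_rel k (Rel.xcomm (k := k) (n := n) i j)
  simp only [X, map_mul] at hr
  exact hr

theorem TX_comm (n i j : ℕ) (h1 : j ≠ i) (h2 : j ≠ i + 1) :
    T k n i * X k n j = X k n j * T k n i := by
  have hr := RingQuot.mkAlgHom_rel k (Rel.txcomm (k := k) (n := n) i j h1 h2)
  simp only [T, X, map_mul] at hr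
  exact hr

theorem TX (n i : ℕ) (h : i + 1 < n) :
    T k n i * X k n i - X k n (i+1) * T k n i = 1 := by
  have hr := RingQuot.mkAlgHom_rel k (Rel.tx (k := k) (n := n) i h)
  simp only [T, X, map_mul, map_sub, map_one] at hr
  exact hr

theorem XT (n i : ℕ) (h : i + 1 < n) :
    X k n i * T k n i - T k n i * X k n (i+1) = 1 := by
  have hr := RingQuot.mkAlgHom_rel k (Rel.xt (k := k) (n := n) i h)
  simp only [T, X, map_mul, map_sub, map_one] at hr
  exact hr

/-- The inclusion `H m → H n` for `m ≤ n`. -/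
def incl (m n : ℕ) (h : m ≤ n) : H k m →ₐ[k] H k n :=
  RingQuot.liftAlgHom k ⟨FreeAlgebra.lift k (fun g =>
    match g with
    | .inl i => if i < m then X k n i else 0
    | .inr i => if i + 1 < m then T k n i else 0), by
      rintro a b r
      induction r with
      | xkill i h' => simp only [FreeAlgebra.lift_ι_apply, map_zero]; rw [if_neg (by omega)]
      | tkill i h' => simp only [FreeAlgebra.lift_ι_apply, map_zero]; rw [if_neg (by omega)]
      | tsq i =>
          simp only [map_mul, FreeAlgebra.lift_ι_apply, map_zero]
          split_ifs <;> simp [T_sq]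
      | braid i =>
          simp only [map_mul, FreeAlgebra.lift_ι_apply]
          split_ifs <;> simp [T_braid]
      | tcomm i j h' =>
          simp only [map_mul, FreeAlgebra.lift_ι_apply]
          split_ifs <;> simp [T_comm k n i j h']
      | xcomm i j =>
          simp only [map_mul, FreeAlgebra.lift_ι_apply]
          split_ifs <;> simp [X_comm k n i j]
      | txcomm i j h1 h2 =>
          simp only [map_mul, FreeAlgebra.lift_ι_apply]
          split_ifs <;> simp [TX_comm k n i j h1 h2]
      | tx i h' =>
          simp only [map_sub, map_mul, map_one, FreeAlgebra.lift_ι_apply]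
          rw [if_pos h', if_pos (by omega : i < m), if_pos (by omega : i + 1 < m)]
          exact TX k n i (by omega)
      | xt i h' =>
          simp only [map_sub, map_mul, map_one, FreeAlgebra.lift_ι_apply]
          rw [if_pos (by omega : i < m), if_pos h', if_pos h']
          exact XT k n i (by omega)⟩

/-- The shift embedding `H m → H n` (sending `x_i ↦ x_{i+1}`, `τ_i ↦ τ_{i+1}`). -/
def shj (m n : ℕ) (h : m + 1 ≤ n ∨ m = 0) : H k m →ₐ[k] H k n :=
  RingQuot.liftAlgHom k ⟨FreeAlgebra.lift k (fun g =>
    match g with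
    | .inl i => if i < m then X k n (i+1) else 0
    | .inr i => if i + 1 < m then T k n (i+1) else 0), by
      rintro a b r
      induction r with
      | xkill i h' => simp only [FreeAlgebra.lift_ι_apply, map_zero]; rw [if_neg (by omega)]
      | tkill i h' => simp only [FreeAlgebra.lift_ι_apply, map_zero]; rw [if_neg (by omega)]
      | tsq i =>
          simp only [map_mul, FreeAlgebra.lift_ι_apply, map_zero]
          split_ifs <;> simp [T_sq]
      | braid i =>
          simp only [map_mul, FreeAlgebra.lift_ι_apply]
          split_ifs <;> simp [T_braid]
      | tcomm i j h' =>
          simp only [map_mul, FreeAlgebra.lift_ι_apply]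
          split_ifs <;> simp [T_comm k n (i+1) (j+1) (by omega)]
      | xcomm i j =>
          simp only [map_mul, FreeAlgebra.lift_ι_apply]
          split_ifs <;> simp [X_comm k n (i+1) (j+1)]
      | txcomm i j h1 h2 =>
          simp only [map_mul, FreeAlgebra.lift_ι_apply]
          split_ifs <;> simp [TX_comm k n (i+1) (j+1) (by omega) (by omega)]
      | tx i h' =>
          simp only [map_sub, map_mul, map_one, FreeAlgebra.lift_ι_apply]
          rw [if_pos h', if_pos (by omega : i < m), if_pos (by omega : i + 1 < m)]
          exact TX k n (i+1) (by omega)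
      | xt i h' =>
          simp only [map_sub, map_mul, map_one, FreeAlgebra.lift_ι_apply]
          rw [if_pos (by omega : i < m), if_pos h', if_pos h']
          exact XT k n (i+1) (by omega)⟩

end NilHecke

namespace NilHecke

variable (k : Type) [Field k]

/-- `ι_0 : H_{n−1}[y] → H_n`, sending `x_i ↦ x_i`, `τ_i ↦ τ_i`, `y ↦ x_n`
(0-based: `y ↦ x_{n-1}`, the last variable). -/
def iota0 (n : ℕ) (p : Polynomial (H k (n-1))) : H k n :=
  p.sum fun i a => incl k (n-1) n (Nat.sub_le n 1) a * X k n (n-1) ^ i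

/-- `ι_1 : H_{n−1}[y] → H_n`, sending `x_i ↦ x_{i+1}`, `τ_i ↦ τ_{i+1}`, `y ↦ x_1`
(0-based: `y ↦ x_0`, the first variable). -/
def iota1 (n : ℕ) (p : Polynomial (H k (n-1))) : H k n :=
  p.sum fun i a => shj k (n-1) n (by omega) a * X k n 0 ^ i

/-- The balancing submodule of `H_n ⊗_k H_n` whose quotient is the balanced tensor
product `H_n ι_0 ⊗_{H_{n−1}[y]} ι_1 H_n`. -/
noncomputable def bal (n : ℕ) : Submodule k (H k n ⊗[k] H k n) :=
  Submodule.span k {z | ∃ (a b : H k n) (p : Polynomial (H k (n-1))),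
    z = (a * iota0 k n p) ⊗ₜ[k] b - a ⊗ₜ[k] (iota1 k n p * b)}

/-- A representative in `H_n ⊗_k H_n` of the element
`Δ_n = Σ_{r=1}^{n} (τ_r ⋯ τ_{n−1}) ⊗ (τ_1 ⋯ τ_{r−1})` (1-based indices). -/
noncomputable def deltaT (n : ℕ) : H k n ⊗[k] H k n :=
  ∑ r ∈ Finset.range n, chain k n r (n-1) ⊗ₜ[k] chain k n 0 r

/-- A representative of `p · Δ_n` for `p ∈ H_n[y]` acting through the left
`H_n[y]`-module structure of `H_n ι_0 ⊗_{H_{n−1}[y]} ι_1 H_n` (on the left factor,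
`y` acting via `x_n`, i.e. a coefficient `c·y^i` sends `m ⊗ h` to `c·m·x_n^i ⊗ h`). -/
noncomputable def actDelta (n : ℕ) (p : Polynomial (H k n)) : H k n ⊗[k] H k n :=
  ∑ r ∈ Finset.range n,
    (p.sum fun i c => c * chain k n r (n-1) * X k n (n-1) ^ i) ⊗ₜ[k] chain k n 0 r

end NilHecke

/-!
Write `τ_i Δ_n − Δ_n τ_i` as the sum over `r` of
`τ_i (τ_r ⋯ τ_{n−1}) ⊗ τ_1 ⋯ τ_{r−1} − τ_r ⋯ τ_{n−1} ⊗ (τ_1 ⋯ τ_{r−1}) τ_i`.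
For `r < i` the braid relation slides `τ_i` through the left factor, where it becomes `τ_{i−1}`
on the right, while it commutes with the right factor; for `r > i + 1` the roles are swapped.
Either way the summand has the form `a τ_j ⊗ b − a ⊗ τ_{j+1} b`, which is zero in the balanced
tensor product because `τ_j ∈ H_{n−1}` acts through `ι_0` as `τ_j` and through `ι_1` as `τ_{j+1}`.
The two remaining summands cancel: `τ_i² = 0` kills one half of each, and the other halves are both
`τ_i ⋯ τ_{n−1} ⊗ τ_1 ⋯ τ_i`.
-/

namespace NilHecke

section

variable (k : Type) [Field k]

theorem chain_mul_chain (n a b c : ℕ) (hab : a ≤ b) (hbc : b ≤ c) :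
    chain k n a b * chain k n b c = chain k n a c := by
  obtain ⟨d, rfl⟩ := Nat.exists_eq_add_of_le hab
  obtain ⟨e, rfl⟩ := Nat.exists_eq_add_of_le hbc
  simp only [chain, Nat.add_sub_cancel_left, show a + d + e - a = d + e by omega,
    ← List.prod_append, ← List.map_append, List.range'_append_1]

theorem chain_succ_self (n a : ℕ) : chain k n a (a + 1) = T k n a := by
  simp [chain]

theorem chain_eq_T_mul (n a b : ℕ) (h : a < b) :
    chain k n a b = T k n a * chain k n (a + 1) b := by
  rw [← chain_succ_self, chain_mul_chain k n a (a + 1) b (by omega) h]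

theorem chain_succ (n a b : ℕ) (h : a ≤ b) :
    chain k n a (b + 1) = chain k n a b * T k n b := by
  rw [← chain_succ_self, chain_mul_chain k n a b (b + 1) h (by omega)]

theorem commute_T_T (n i j : ℕ) (h : i + 1 < j ∨ j + 1 < i) :
    Commute (T k n i) (T k n j) := by
  rcases h with h | h
  · exact T_comm k n i j h
  · exact (T_comm k n j i h).symm

theorem commute_T_chain (n j a b : ℕ) (h : b < j ∨ j + 1 < a) :
    Commute (T k n j) (chain k n a b) := by
  refine Commute.list_prod_right _ _ fun x hx => ?_
  obtain ⟨l, hl, rfl⟩ := List.mem_map.1 hx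
  rw [List.mem_range'_1] at hl
  exact commute_T_T k n j l (by omega)

theorem T_succ_mul_chain (n j a b : ℕ) (ha : a ≤ j) (hb : j + 1 < b) :
    T k n (j + 1) * chain k n a b = chain k n a b * T k n j := by
  set L := chain k n a j
  set R := chain k n (j + 2) b
  have hsplit : chain k n a b = L * (T k n j * T k n (j + 1)) * R := by
    rw [← chain_mul_chain k n a j b ha (by omega), chain_eq_T_mul k n j b (by omega),
      chain_eq_T_mul k n (j + 1) b hb]
    simp only [mul_assoc]
    rfl
  have hL : T k n (j + 1) * L = L * T k n (j + 1) := (commute_T_chain k n (j + 1) a j (by omega)).eq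
  have hR : T k n j * R = R * T k n j := (commute_T_chain k n j (j + 2) b (by omega)).eq
  calc T k n (j + 1) * chain k n a b
      = L * (T k n (j + 1) * T k n j * T k n (j + 1)) * R := by
        rw [hsplit, ← mul_assoc, ← mul_assoc, hL]; simp only [mul_assoc]
    _ = L * (T k n j * T k n (j + 1)) * (T k n j * R) := by
        rw [← T_braid]; simp only [mul_assoc]
    _ = chain k n a b * T k n j := by
        rw [hR, hsplit]; simp only [mul_assoc]

theorem incl_T (m n j : ℕ) (hmn : m ≤ n) (h : j + 1 < m) :
    incl k m n hmn (T k m j) = T k n j := by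
  rw [T, incl]
  erw [RingQuot.liftAlgHom_mkAlgHom_apply, FreeAlgebra.lift_ι_apply]
  simp [h]

theorem shj_T (m n j : ℕ) (hmn : m + 1 ≤ n ∨ m = 0) (h : j + 1 < m) :
    shj k m n hmn (T k m j) = T k n (j + 1) := by
  rw [T, shj]
  erw [RingQuot.liftAlgHom_mkAlgHom_apply, FreeAlgebra.lift_ι_apply]
  simp [h]

theorem iota0_C (n : ℕ) (c : H k (n - 1)) :
    iota0 k n (Polynomial.C c) = incl k (n - 1) n (Nat.sub_le n 1) c := by
  simp [iota0]

theorem iota1_C (n : ℕ) (c : H k (n - 1)) :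
    iota1 k n (Polynomial.C c) = shj k (n - 1) n (by omega) c := by
  simp [iota1]

theorem mul_T_tmul_sub_tmul_T_succ_mul_mem_bal (n j : ℕ) (hj : j + 2 < n) (a b : H k n) :
    (a * T k n j) ⊗ₜ[k] b - a ⊗ₜ[k] (T k n (j + 1) * b) ∈ bal k n := by
  refine Submodule.subset_span ⟨a, b, Polynomial.C (T k (n - 1) j), ?_⟩
  rw [iota0_C, iota1_C, incl_T k (n - 1) n j _ (by omega), shj_T k (n - 1) n j _ (by omega)]

noncomputable def tauDeltaTerm (n i r : ℕ) : H k n ⊗[k] H k n :=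
  (T k n i * chain k n r (n - 1)) ⊗ₜ[k] chain k n 0 r
    - chain k n r (n - 1) ⊗ₜ[k] (chain k n 0 r * T k n i)

theorem tauDeltaTerm_mem_bal_of_lt (n i r : ℕ) (hr : r < i) (hi : i + 1 < n) :
    tauDeltaTerm k n i r ∈ bal k n := by
  obtain ⟨j, rfl⟩ : ∃ j, i = j + 1 := ⟨i - 1, by omega⟩
  rw [tauDeltaTerm, T_succ_mul_chain k n j r (n - 1) (by omega) (by omega),
    (commute_T_chain k n (j + 1) 0 r (by omega)).symm.eq]
  exact mul_T_tmul_sub_tmul_T_succ_mul_mem_bal k n j (by omega) _ _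

theorem tauDeltaTerm_mem_bal_of_gt (n i r : ℕ) (hr : i + 1 < r) (hrn : r < n) :
    tauDeltaTerm k n i r ∈ bal k n := by
  rw [tauDeltaTerm, (commute_T_chain k n i r (n - 1) (by omega)).eq,
    ← T_succ_mul_chain k n i 0 r (by omega) hr]
  exact mul_T_tmul_sub_tmul_T_succ_mul_mem_bal k n i (by omega) _ _

theorem tauDeltaTerm_add_tauDeltaTerm_succ (n i : ℕ) (hi : i + 1 < n) :
    tauDeltaTerm k n i i + tauDeltaTerm k n i (i + 1) = 0 := by
  have hleft : T k n i * chain k n i (n - 1) = 0 := by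
    rw [chain_eq_T_mul k n i (n - 1) (by omega), ← mul_assoc, T_sq, zero_mul]
  have hright : chain k n 0 (i + 1) * T k n i = 0 := by
    rw [chain_succ k n 0 i (Nat.zero_le i), mul_assoc, T_sq, mul_zero]
  rw [tauDeltaTerm, tauDeltaTerm, hleft, hright, ← chain_succ k n 0 i (Nat.zero_le i),
    ← chain_eq_T_mul k n i (n - 1) (by omega)]
  simp

end

/-- `τ_i · Δ_n = Δ_n · τ_i` in
`H_n ι_0 ⊗_{H_{n−1}[y]} ι_1 H_n` (realized as the quotient of `H_n ⊗_k H_n` by the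
balancing submodule `bal`), for each `1 ≤ i ≤ n − 1` (0-based: `i + 1 < n`). -/
theorem tau_delta_comm (k : Type) [Field k] (n i : ℕ) (hi : i + 1 < n) :
    (∑ r ∈ Finset.range n, (T k n i * chain k n r (n-1)) ⊗ₜ[k] chain k n 0 r)
      - (∑ r ∈ Finset.range n, chain k n r (n-1) ⊗ₜ[k] (chain k n 0 r * T k n i))
      ∈ bal k n := by
  have hpair : {i, i + 1} ⊆ Finset.range n :=
    Finset.insert_subset_iff.2 ⟨Finset.mem_range.2 (by omega),
      Finset.singleton_subset_iff.2 (Finset.mem_range.2 hi)⟩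
  rw [← Finset.sum_sub_distrib, ← Finset.sum_sdiff hpair,
    Finset.sum_pair (Nat.ne_add_one i)]
  simp only [← tauDeltaTerm.eq_1, tauDeltaTerm_add_tauDeltaTerm_succ k n i hi, add_zero]
  refine Submodule.sum_mem _ fun r hr => ?_
  simp only [Finset.mem_sdiff, Finset.mem_range, Finset.mem_insert,
    Finset.mem_singleton] at hr
  rcases lt_or_gt_of_ne (show r ≠ i by omega) with h | h
  · exact tauDeltaTerm_mem_bal_of_lt k n i r h hi
  · exact tauDeltaTerm_mem_bal_of_gt k n i r (by omega) hr.1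

end NilHecke
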